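/- arXiv:0909.2770 — 4 statements merged into one kernel-verified Lean document; each statement's English description precedes it below -/
import Mathlib

section
/- Let G₁ and G₂ be finite simple graphs. If there exists a semi-locally-surjective graph homomorphism from G₁ to G₂, then B(G₂) ⊆ B(G₁), i.e., every positive integer k such that G₂ admits a colorful k-coloring also satisfies that G₁ admits a colorful k-coloring. -/
/-- A proper coloring of `G` with colors in `Fin k`. -/
def IsProperColoring {V : Type*} (G : SimpleGraph V) {k : ℕ} (f : V → Fin k) : Prop :=
  ∀ u v : V, G.Adj u v → f u ≠ f v

/-- A vertex `v` is b-dominating w.r.t. the coloring `f` if every color appears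
on the closed neighborhood of `v`. -/
def IsBDominating {V : Type*} (G : SimpleGraph V) {k : ℕ} (f : V → Fin k) (v : V) : Prop :=
  ∀ i : Fin k, f v = i ∨ ∃ u : V, G.Adj v u ∧ f u = i

/-- A colorful (b-) coloring: a proper coloring in which every color class contains
a b-dominating vertex. -/
def IsColorfulColoring {V : Type*} (G : SimpleGraph V) {k : ℕ} (f : V → Fin k) : Prop :=
  IsProperColoring G f ∧ ∀ i : Fin k, ∃ v : V, f v = i ∧ IsBDominating G f v

/-- `BSet G` is the set of positive integers `k` such that `G` has a colorful `k`-coloring. -/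
def BSet {V : Type*} (G : SimpleGraph V) : Set ℕ :=
  {k | 0 < k ∧ ∃ f : V → Fin k, IsColorfulColoring G f}

/-- The b-chromatic number: the maximum of `BSet G`. -/
noncomputable def bChromaticNumber {V : Type*} (G : SimpleGraph V) : ℕ :=
  sSup (BSet G)

/-- A semi-locally-surjective graph homomorphism from `G` to `H`. -/
def IsSLSHom {V W : Type*} (G : SimpleGraph V) (H : SimpleGraph W) (f : V → W) : Prop :=
  (∀ a b : V, G.Adj a b → H.Adj (f a) (f b)) ∧
  Function.Surjective f ∧
  ∀ u : W, ∃ a : V, f a = u ∧ ∀ v : W, H.Adj u v → ∃ b : V, f b = v ∧ G.Adj a b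

/-- Vertices of the Kneser graph `KG n m`: `m`-element subsets of `{1, ..., n}`. -/
def KneserVert (n m : ℕ) : Type :=
  {A : Finset ℕ // A ⊆ Finset.Icc 1 n ∧ A.card = m}

/-- The Kneser graph `KG n m`. -/
def KG (n m : ℕ) : SimpleGraph (KneserVert n m) where
  Adj X Y := X ≠ Y ∧ Disjoint X.1 Y.1
  symm := by
    constructor
    intro X Y h
    exact ⟨h.1.symm, h.2.symm⟩
  loopless := by
    constructor
    intro X h
    exact h.1 rfl

lemma IsBDominating.comp {V W : Type*} {G : SimpleGraph V} {H : SimpleGraph W} {k : ℕ}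
    {c : W → Fin k} {f : V → W} {a : V} (hdom : IsBDominating H c (f a))
    (hlift : ∀ w : W, H.Adj (f a) w → ∃ b : V, f b = w ∧ G.Adj a b) :
    IsBDominating G (c ∘ f) a := by
  intro i
  rcases hdom i with hi | ⟨w, hadj, hw⟩
  · exact Or.inl hi
  · obtain ⟨b, rfl, hab⟩ := hlift w hadj
    exact Or.inr ⟨b, hab, hw⟩

lemma IsProperColoring.comp {V W : Type*} {G : SimpleGraph V} {H : SimpleGraph W} {k : ℕ}
    {c : W → Fin k} {f : V → W} (hc : IsProperColoring H c)
    (hf : ∀ a b : V, G.Adj a b → H.Adj (f a) (f b)) :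
    IsProperColoring G (c ∘ f) :=
  fun a b hab => hc _ _ (hf a b hab)

lemma IsColorfulColoring.comp_of_isSLSHom {V W : Type*} {G : SimpleGraph V} {H : SimpleGraph W}
    {k : ℕ} {c : W → Fin k} {f : V → W} (hc : IsColorfulColoring H c) (hf : IsSLSHom G H f) :
    IsColorfulColoring G (c ∘ f) := by
  obtain ⟨hproper, hclasses⟩ := hc
  obtain ⟨hhom, -, hlocal⟩ := hf
  refine ⟨hproper.comp hhom, fun i => ?_⟩
  obtain ⟨w, hw, hdom⟩ := hclasses i
  obtain ⟨a, rfl, hlift⟩ := hlocal w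
  exact ⟨a, hw, hdom.comp hlift⟩

theorem stmt_4_general {V₁ V₂ : Type*}
    (G₁ : SimpleGraph V₁) (G₂ : SimpleGraph V₂)
    (h : ∃ f : V₁ → V₂, IsSLSHom G₁ G₂ f) :
    BSet G₂ ⊆ BSet G₁ := by
  obtain ⟨f, hf⟩ := h
  rintro k ⟨hk, c, hc⟩
  exact ⟨hk, c ∘ f, hc.comp_of_isSLSHom hf⟩

/-- If there exists a semi-locally-surjective graph homomorphism from `G₁`
to `G₂`, then `B(G₂) ⊆ B(G₁)`. -/
theorem stmt_4 {V₁ V₂ : Type*} [Fintype V₁] [Fintype V₂]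
    (G₁ : SimpleGraph V₁) (G₂ : SimpleGraph V₂)
    (h : ∃ f : V₁ → V₂, IsSLSHom G₁ G₂ f) :
    BSet G₂ ⊆ BSet G₁ :=
  stmt_4_general G₁ G₂ h
end

section
/- For every natural number k ≥ 1, the Kneser graph KG(2k+1, k) is b-continuous; that is, every integer j with χ(KG(2k+1,k)) ≤ j ≤ b(KG(2k+1,k)) belongs to B(KG(2k+1,k)). -/
/-!
The chromatic number of `KG(2k+1, k)` is at least `3` because the blocks of `k` cyclically
consecutive points of `{1, …, 2k+1}` form a closed walk of odd length `2k+1`. Its b-chromatic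
number is at most `k + 2`: the complement of a vertex has `k + 1` points, so every vertex has
exactly `k + 1` neighbours, and a `j ≥ k + 2` in the range is `b` itself. So it remains to give,
for `2 ≤ n ≤ k`, a colourful `(n+1)`-colouring.

Split the points into `low = {1, …, n}` and `high = {n+1, …, 2k+1}`. Colour `c < n` is the star
at `c + 1`, and colour `n` contains every set inside `high`, an intersecting family because
`|high| < 2k`. Colouring by the least low point makes this proper, but then the neighbours of a
vertex see at most two colours. The fix recolours the sets that miss a single low point `e` by
the cyclic successor of `e`, and the sets that miss two low points `c + 1` and `e` and meet `high`
in a prescribed `hub c` by the cyclic successor of `e` (or by `n` if that successor is `c + 1`).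
These two kinds of sets are exactly the neighbours of the chosen b-dominating vertices.
-/

open Finset

section General

variable {V : Type*} {G : SimpleGraph V}

def walkOfSeq (w : ℕ → V) (hw : ∀ i, G.Adj (w i) (w (i + 1))) : (m : ℕ) → G.Walk (w 0) (w m)
  | 0 => .nil
  | m + 1 => (walkOfSeq w hw m).concat (hw m)

lemma length_walkOfSeq (w : ℕ → V) (hw : ∀ i, G.Adj (w i) (w (i + 1))) (m : ℕ) :
    (walkOfSeq w hw m).length = m := by
  induction m with
  | zero => rfl
  | succ m ih => simp [walkOfSeq, ih]

theorem three_le_chromaticNumber_of_odd_period (w : ℕ → V) (hw : ∀ i, G.Adj (w i) (w (i + 1)))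
    {p : ℕ} (hp : Odd p) (hper : w p = w 0) : 3 ≤ G.chromaticNumber :=
  ((walkOfSeq w hw p).copy rfl hper).three_le_chromaticNumber_of_odd_loop
    (by simpa [length_walkOfSeq] using hp)

lemma le_card_add_one_of_isBDominating {m : ℕ} {f : V → Fin m} {v : V}
    (hv : IsBDominating G f v) (s : Finset V) (hs : ∀ u, G.Adj v u → u ∈ s) : m ≤ #s + 1 := by
  have hcover : univ.erase (f v) ⊆ s.image f := by
    intro i hi
    rcases hv i with h | ⟨u, hu, rfl⟩
    · exact absurd h.symm (ne_of_mem_erase hi)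
    · exact mem_image_of_mem f (hs u hu)
  have := (card_le_card hcover).trans card_image_le
  rw [card_erase_of_mem (mem_univ _), card_univ, Fintype.card_fin] at this
  omega

lemma bChromaticNumber_mem_bSet (hbdd : BddAbove (BSet G)) (hpos : 0 < bChromaticNumber G) :
    bChromaticNumber G ∈ BSet G := by
  refine Nat.sSup_mem ?_ hbdd
  by_contra hempty
  rw [Set.not_nonempty_iff_eq_empty] at hempty
  simp [bChromaticNumber, hempty] at hpos

end General

namespace Kneser

variable {k : ℕ}

lemma adj_iff_disjoint {n m : ℕ} (hm : 1 ≤ m) {A B : KneserVert n m} :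
    (KG n m).Adj A B ↔ Disjoint A.1 B.1 := by
  refine ⟨And.right, fun h => ⟨fun hAB => ?_, h⟩⟩
  subst hAB
  have hcard := A.2.2
  rw [(disjoint_self_iff_empty _).mp h, card_empty] at hcard
  omega

lemma card_compl (A : KneserVert (2 * k + 1) k) : #(Icc 1 (2 * k + 1) \ A.1) = k + 1 := by
  rw [card_sdiff_of_subset A.2.1, Nat.card_Icc, A.2.2]
  omega

def complErase (A : KneserVert (2 * k + 1) k) (x : ℕ) (hx : x ∈ Icc 1 (2 * k + 1) \ A.1) :
    KneserVert (2 * k + 1) k :=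
  ⟨(Icc 1 (2 * k + 1) \ A.1).erase x, (erase_subset _ _).trans sdiff_subset,
    by rw [card_erase_of_mem hx, card_compl]; rfl⟩

@[simp]
lemma mem_complErase {A : KneserVert (2 * k + 1) k} {x : ℕ} {hx : x ∈ Icc 1 (2 * k + 1) \ A.1}
    {a : ℕ} : a ∈ (complErase A x hx).1 ↔ a ≠ x ∧ (1 ≤ a ∧ a ≤ 2 * k + 1) ∧ a ∉ A.1 := by
  simp [complErase]

lemma adj_complErase (hk : 1 ≤ k) (A : KneserVert (2 * k + 1) k) (x : ℕ)
    (hx : x ∈ Icc 1 (2 * k + 1) \ A.1) : (KG (2 * k + 1) k).Adj A (complErase A x hx) :=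
  (adj_iff_disjoint hk).2 <| disjoint_of_subset_right (erase_subset _ _) disjoint_sdiff

lemma isBDominating_of_complErase (hk : 1 ≤ k) {m : ℕ} {f : KneserVert (2 * k + 1) k → Fin m}
    {A : KneserVert (2 * k + 1) k}
    (h : ∀ i, f A ≠ i → ∃ x hx, f (complErase A x hx) = i) : IsBDominating (KG (2 * k + 1) k) f A :=
  fun i => (em (f A = i)).imp id fun hi =>
    let ⟨x, hx, hfx⟩ := h i hi
    ⟨_, adj_complErase hk A x hx, hfx⟩

lemma le_of_mem_bSet {m : ℕ} (hm : m ∈ BSet (KG (2 * k + 1) k)) : m ≤ k + 2 := by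
  obtain ⟨hpos, f, -, hdom⟩ := hm
  obtain ⟨v, -, hv⟩ := hdom ⟨0, hpos⟩
  let nbrs : Finset (KneserVert (2 * k + 1) k) :=
    ((Icc 1 (2 * k + 1) \ v.1).powersetCard k).subtype _
  have hnbrs : ∀ u, (KG (2 * k + 1) k).Adj v u → u ∈ nbrs := fun u hu =>
    mem_subtype.2 <| mem_powersetCard.2
      ⟨fun a ha => mem_sdiff.2 ⟨u.2.1 ha, fun hav => disjoint_left.1 hu.2 hav ha⟩, u.2.2⟩
  have hcard : #nbrs ≤ k + 1 := by
    calc #nbrs ≤ #((Icc 1 (2 * k + 1) \ v.1).powersetCard k) :=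
          (card_subtype _ _).trans_le (card_filter_le _ _)
      _ = k + 1 := by rw [card_powersetCard, card_compl, Nat.choose_succ_self_right]
  have := le_card_add_one_of_isBDominating hv nbrs hnbrs
  omega

def arc (k i : ℕ) : Finset ℕ := (range k).image fun a => (i * k + a) % (2 * k + 1) + 1

lemma card_arc (i : ℕ) : #(arc k i) = k := by
  rw [arc, card_image_of_injOn, card_range]
  intro a ha b hb hab
  simp only [coe_range, Set.mem_Iio] at ha hb
  have := Nat.ModEq.add_left_cancel' (i * k) (Nat.add_right_cancel hab)
  rwa [Nat.ModEq, Nat.mod_eq_of_lt (by omega), Nat.mod_eq_of_lt (by omega)] at this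

lemma arc_subset (i : ℕ) : arc k i ⊆ Icc 1 (2 * k + 1) := by
  intro x hx
  obtain ⟨a, -, rfl⟩ := mem_image.1 hx
  have := Nat.mod_lt (i * k + a) (show 0 < 2 * k + 1 by omega)
  rw [mem_Icc]
  omega

lemma disjoint_arc_succ (i : ℕ) : Disjoint (arc k i) (arc k (i + 1)) := by
  simp only [arc, disjoint_left, mem_image, mem_range]
  rintro _ ⟨a, ha, rfl⟩ ⟨b, hb, hab⟩
  have hmod : (i * k + (k + b)) % (2 * k + 1) = (i * k + a) % (2 * k + 1) := by
    rw [← Nat.add_right_cancel hab]; ring_nf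
  have := Nat.ModEq.add_left_cancel' (i * k) hmod
  rw [Nat.ModEq, Nat.mod_eq_of_lt (by omega), Nat.mod_eq_of_lt (by omega)] at this
  omega

lemma arc_period : arc k (2 * k + 1) = arc k 0 := by
  refine image_congr fun a _ => ?_
  simp only [zero_mul, zero_add, Nat.mul_comm (2 * k + 1), Nat.mul_add_mod_self_right]

theorem three_le_chromaticNumber (hk : 1 ≤ k) : 3 ≤ (KG (2 * k + 1) k).chromaticNumber :=
  three_le_chromaticNumber_of_odd_period
    (fun i => (⟨arc k i, arc_subset i, card_arc i⟩ : KneserVert _ _))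
    (fun i => (adj_iff_disjoint hk).2 (disjoint_arc_succ i)) (odd_two_mul_add_one k)
    (Subtype.ext arc_period)

namespace HybridColoring

def low (n : ℕ) : Finset ℕ := Icc 1 n

def high (n k : ℕ) : Finset ℕ := Icc (n + 1) (2 * k + 1)

def hub (n k c : ℕ) : Finset ℕ := insert (k + 2 + c) (Icc (n + 1) (k + 1))

/-- The part `hub n k c` in `high n k` records which of the two missing low points is `c + 1`. -/
def IsPairShape (n k : ℕ) (A : Finset ℕ) (p : ℕ × ℕ) : Prop :=
  p.1 < n ∧ p.2 ≠ p.1 + 1 ∧ low n \ A = {p.1 + 1, p.2} ∧ A ∩ high n k = hub n k p.1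

open Classical in
/-- Colours `c < n` are stars: a set of colour `c` contains `c + 1`. Colour `n` collects the
sets inside `high n k` together with the pair-shaped sets `A` whose second missing point `e`
would otherwise get colour `c`. -/
noncomputable def color (n k : ℕ) (A : Finset ℕ) : ℕ :=
  if hA : (A ∩ low n).Nonempty then
    if hp : ∃ p, IsPairShape n k A p then
      if hp.choose.2 % n = hp.choose.1 then n else hp.choose.2 % n
    else if he : ∃ e, low n \ A = {e} then he.choose % n
    else (A ∩ low n).min' hA - 1
  else n

variable {n k : ℕ}

lemma mem_low {a : ℕ} : a ∈ low n ↔ 1 ≤ a ∧ a ≤ n := mem_Icc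

lemma mem_high {a : ℕ} : a ∈ high n k ↔ n + 1 ≤ a ∧ a ≤ 2 * k + 1 := mem_Icc

lemma mem_hub {a c : ℕ} : a ∈ hub n k c ↔ a = k + 2 + c ∨ n + 1 ≤ a ∧ a ≤ k + 1 := by
  simp [hub]

lemma card_hub (hnk : n ≤ k) (c : ℕ) : #(hub n k c) = k + 2 - n := by
  rw [hub, card_insert_of_notMem (by rw [mem_Icc]; omega), Nat.card_Icc]
  omega

lemma mod_add_one_mem_low (hn : 2 ≤ n) {e : ℕ} (he : e ∈ low n) :
    e % n + 1 ∈ low n ∧ e % n + 1 ≠ e := by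
  rw [mem_low] at *
  rcases he.2.lt_or_eq with h | rfl
  · rw [Nat.mod_eq_of_lt h]; omega
  · rw [Nat.mod_self]; omega

lemma mod_eq_of_low_eq_pair {c e : ℕ} (hne : e ≠ c + 1) (h : low n = {c + 1, e}) :
    e % n = c := by
  have hn : n = 2 := by
    simpa [low, card_pair hne.symm] using congrArg card h
  subst hn
  have hc : c + 1 ∈ low 2 := h ▸ mem_insert_self _ _
  have he : e ∈ low 2 := h ▸ mem_insert_of_mem (mem_singleton_self e)
  rw [mem_low] at hc he
  omega

lemma IsPairShape.unique {A : Finset ℕ} {p q : ℕ × ℕ} (hp : IsPairShape n k A p)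
    (hq : IsPairShape n k A q) : p = q := by
  have h1 : p.1 = q.1 := by
    have : k + 2 + p.1 ∈ hub n k q.1 := hq.2.2.2 ▸ hp.2.2.2 ▸ mem_hub.2 (Or.inl rfl)
    rw [mem_hub] at this
    omega
  have h2 : p.2 ∈ ({q.1 + 1, q.2} : Finset ℕ) := hq.2.2.1 ▸ hp.2.2.1 ▸ by simp
  simp only [mem_insert, mem_singleton] at h2
  have := hp.2.1
  exact Prod.ext h1 (by omega)

lemma color_le (hn : 0 < n) (A : Finset ℕ) : color n k A ≤ n := by
  unfold color
  split_ifs with hA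
  · exact le_rfl
  · exact (Nat.mod_lt _ hn).le
  · exact (Nat.mod_lt _ hn).le
  · have := (mem_inter.1 ((A ∩ low n).min'_mem hA)).2
    rw [mem_low] at this
    omega
  · exact le_rfl

lemma color_of_not_nonempty {A : Finset ℕ} (hA : ¬(A ∩ low n).Nonempty) : color n k A = n := by
  rw [color, dif_neg hA]

lemma color_of_isPairShape {A : Finset ℕ} {c e : ℕ} (hp : IsPairShape n k A (c, e)) :
    color n k A = if e % n = c then n else e % n := by
  by_cases hA : (A ∩ low n).Nonempty
  · have hex : ∃ p, IsPairShape n k A p := ⟨_, hp⟩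
    rw [color, dif_pos hA, dif_pos hex, (IsPairShape.unique hex.choose_spec hp)]
  · have hlow : low n = {c + 1, e} := by
      rw [← hp.2.2.1, eq_comm, Finset.sdiff_eq_self_iff_disjoint, disjoint_iff_inter_eq_empty,
        inter_comm]
      exact not_nonempty_iff_eq_empty.1 hA
    rw [color_of_not_nonempty hA, if_pos (mod_eq_of_low_eq_pair hp.2.1 hlow)]

lemma color_of_single (hn : 2 ≤ n) {A : Finset ℕ} {e : ℕ} (he : low n \ A = {e}) :
    color n k A = e % n := by
  have hA : (A ∩ low n).Nonempty := by
    rw [nonempty_iff_ne_empty]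
    intro hempty
    have := card_sdiff_add_card_inter (low n) A
    rw [he, inter_comm, hempty, low, Nat.card_Icc, card_singleton, card_empty] at this
    omega
  have hnp : ¬∃ p, IsPairShape n k A p := by
    rintro ⟨p, hp⟩
    have := congrArg card (he.symm.trans hp.2.2.1)
    rw [card_singleton, card_pair (Ne.symm hp.2.1)] at this
    omega
  have hex : ∃ e, low n \ A = {e} := ⟨e, he⟩
  rw [color, dif_pos hA, dif_neg hnp, dif_pos hex,
    singleton_inj.1 (hex.choose_spec.symm.trans he)]

lemma color_of_inter_low_eq_singleton (hnk : n ≤ k) {A : Finset ℕ} {c : ℕ}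
    (hAlow : A ∩ low n = {c + 1}) (hA : n + 1 ∉ A) : color n k A = c := by
  have hne : (A ∩ low n).Nonempty := hAlow ▸ singleton_nonempty _
  have hnp : ¬∃ p, IsPairShape n k A p := by
    rintro ⟨p, hp⟩
    have : n + 1 ∈ A ∩ high n k := hp.2.2.2 ▸ mem_hub.2 (Or.inr ⟨le_rfl, by omega⟩)
    exact hA (mem_inter.1 this).1
  rw [color, dif_pos hne, dif_neg hnp]
  split_ifs with hsingle
  · have ⟨e, he⟩ := hsingle
    have hlow : low n = {c + 1, e} := by
      rw [← sdiff_union_inter (low n) A, he, inter_comm, hAlow, union_comm]; rfl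
    rw [singleton_inj.1 (hsingle.choose_spec.symm.trans he)]
    have hcA : c + 1 ∈ A := (mem_inter.1 (hAlow ▸ mem_singleton_self _ : c + 1 ∈ A ∩ low n)).1
    have heA : e ∉ A := (mem_sdiff.1 (he ▸ mem_singleton_self e : e ∈ low n \ A)).2
    exact mod_eq_of_low_eq_pair (fun h => heA (h ▸ hcA)) hlow
  · simp [hAlow]

lemma add_one_mem_of_color_lt (hn : 2 ≤ n) {A : Finset ℕ} {d : ℕ} (hd : color n k A = d)
    (hdn : d < n) : d + 1 ∈ A := by
  have hmiss : ∀ s : Finset ℕ, low n \ A = s → d + 1 ∈ low n → d + 1 ∉ s → d + 1 ∈ A :=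
    fun s hs hlow hs' => by_contra fun hA => hs' (hs ▸ mem_sdiff.2 ⟨hlow, hA⟩)
  unfold color at hd
  split_ifs at hd with hA hp hpe hsingle
  · omega
  · obtain ⟨-, -, hpA, -⟩ := hp.choose_spec
    have he : hp.choose.2 ∈ low n := (mem_sdiff.1 (hpA ▸ by simp : hp.choose.2 ∈ low n \ A)).1
    obtain ⟨hlow, hne⟩ := mod_add_one_mem_low hn he
    refine hmiss _ hpA (hd ▸ hlow) ?_
    simp only [mem_insert, mem_singleton, not_or]
    omega
  · have he : hsingle.choose ∈ low n :=
      (mem_sdiff.1 (hsingle.choose_spec ▸ mem_singleton_self _)).1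
    obtain ⟨hlow, hne⟩ := mod_add_one_mem_low hn he
    refine hmiss _ hsingle.choose_spec (hd ▸ hlow) ?_
    rw [mem_singleton]
    omega
  · have hmin := (A ∩ low n).min'_mem hA
    have := (mem_inter.1 hmin).2
    rw [mem_low] at this
    rw [← hd, Nat.sub_add_cancel this.1]
    exact (mem_inter.1 hmin).1
  · omega

lemma color_eq_self_cases (hn : 0 < n) {A : Finset ℕ} (hA : color n k A = n) :
    A ∩ low n = ∅ ∨ ∃ c < n, A ∩ high n k = hub n k c := by
  unfold color at hA
  split_ifs at hA with hne hp hpe hsingle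
  · exact Or.inr ⟨_, hp.choose_spec.1, hp.choose_spec.2.2.2⟩
  · exact absurd hA (Nat.mod_lt _ hn).ne
  · exact absurd hA (Nat.mod_lt _ hn).ne
  · have := (mem_inter.1 ((A ∩ low n).min'_mem hne)).2
    rw [mem_low] at this
    omega
  · exact Or.inl (not_nonempty_iff_eq_empty.1 hne)

lemma le_card_inter_high_of_color_eq_self (hn : 2 ≤ n) (hnk : n ≤ k) {A : Finset ℕ}
    (hsub : A ⊆ Icc 1 (2 * k + 1)) (hcard : #A = k) (hA : color n k A = n) :
    k + 2 - n ≤ #(A ∩ high n k) ∧ (k ≤ #(A ∩ high n k) ∨ n + 1 ∈ A) := by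
  rcases color_eq_self_cases (by omega) hA with hlow | ⟨c, -, hhub⟩
  · have : A ∩ high n k = A := by
      refine inter_eq_left.2 fun a ha => ?_
      have h1 := mem_Icc.1 (hsub ha)
      have h2 : a ∉ low n := fun h => notMem_empty a (hlow ▸ mem_inter.2 ⟨ha, h⟩)
      rw [mem_low] at h2
      rw [mem_high]
      omega
    rw [this, hcard]
    omega
  · refine ⟨(card_hub hnk c).ge.trans (card_le_card hhub.ge), Or.inr ?_⟩
    have : n + 1 ∈ A ∩ high n k := hhub ▸ mem_hub.2 (Or.inr ⟨le_rfl, by omega⟩)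
    exact (mem_inter.1 this).1

/-- Two disjoint sets of colour `n` would need more than the `2k + 1 - n` points of `high n k`,
unless both contain `n + 1`. -/
lemma not_disjoint_of_color_eq_self (hn : 2 ≤ n) (hnk : n ≤ k) {A B : KneserVert (2 * k + 1) k}
    (hA : color n k A.1 = n) (hB : color n k B.1 = n) : ¬Disjoint A.1 B.1 := by
  intro hAB
  obtain ⟨hA1, hA2⟩ := le_card_inter_high_of_color_eq_self hn hnk A.2.1 A.2.2 hA
  obtain ⟨hB1, hB2⟩ := le_card_inter_high_of_color_eq_self hn hnk B.2.1 B.2.2 hB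
  have hsum : #(A.1 ∩ high n k) + #(B.1 ∩ high n k) ≤ 2 * k + 1 - n := by
    rw [← card_union_of_disjoint (disjoint_of_subset_left inter_subset_left
      (disjoint_of_subset_right inter_subset_left hAB))]
    calc _ ≤ #(high n k) := card_le_card (union_subset inter_subset_right inter_subset_right)
      _ = 2 * k + 1 - n := by rw [high, Nat.card_Icc]; omega
  rcases hA2 with hA2 | hA2
  · omega
  rcases hB2 with hB2 | hB2
  · omega
  · exact disjoint_left.1 hAB hA2 hB2

noncomputable def finColoring (n k : ℕ) (hn : 0 < n) : KneserVert (2 * k + 1) k → Fin (n + 1) :=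
  fun A => ⟨color n k A.1, Nat.lt_succ_of_le (color_le hn A.1)⟩

lemma isProperColoring_finColoring (hn : 2 ≤ n) (hnk : n ≤ k) :
    IsProperColoring (KG (2 * k + 1) k) (finColoring n k (by omega)) := by
  intro A B hAB hAB'
  have hcol : color n k A.1 = color n k B.1 := congrArg Fin.val hAB'
  rcases (color_le (n := n) (k := k) (by omega) A.1).lt_or_eq with hlt | heq
  · exact disjoint_left.1 hAB.2 (add_one_mem_of_color_lt hn rfl hlt)
      (add_one_mem_of_color_lt hn hcol.symm hlt)
  · exact not_disjoint_of_color_eq_self hn hnk heq (hcol ▸ heq) hAB.2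

lemma exists_mem_low_mod_eq {i : ℕ} (hi : i < n) : ∃ y ∈ low n, y % n = i := by
  rcases Nat.eq_zero_or_pos i with rfl | hi0
  · exact ⟨n, mem_low.2 ⟨by omega, le_rfl⟩, Nat.mod_self n⟩
  · exact ⟨i, mem_low.2 ⟨hi0, hi.le⟩, Nat.mod_eq_of_lt hi⟩

lemma add_one_mod_ne (hn : 2 ≤ n) {c : ℕ} (hc : c < n) : (c + 1) % n ≠ c := by
  rcases (show c + 1 < n ∨ c + 1 = n by omega) with h | h
  · rw [Nat.mod_eq_of_lt h]; omega
  · rw [h, Nat.mod_self]; omega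

/-- Its complement is `(low n \ {c + 1}) ∪ hub n k c`, so its neighbours drop one point from
this set and are exactly the single-miss and pair-shaped sets that realise the other colours. -/
def starSet (k c : ℕ) : Finset ℕ := insert (c + 1) ((Icc (k + 2) (2 * k + 1)).erase (k + 2 + c))

lemma mem_starSet {c a : ℕ} :
    a ∈ starSet k c ↔ a = c + 1 ∨ a ≠ k + 2 + c ∧ k + 2 ≤ a ∧ a ≤ 2 * k + 1 := by
  simp [starSet]

def starVertex {c : ℕ} (hc : c < k) : KneserVert (2 * k + 1) k :=
  ⟨starSet k c, fun a ha => by rw [mem_starSet] at ha; rw [mem_Icc]; omega, by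
    rw [starSet, card_insert_of_notMem (by simp; omega), card_erase_of_mem (by simp; omega),
      Nat.card_Icc]
    omega⟩

lemma mem_starVertex {c : ℕ} {hc : c < k} {a : ℕ} :
    a ∈ (starVertex hc).1 ↔ a = c + 1 ∨ a ≠ k + 2 + c ∧ k + 2 ≤ a ∧ a ≤ 2 * k + 1 :=
  mem_starSet

def highVertex (n k : ℕ) (hnk : n ≤ k + 1) : KneserVert (2 * k + 1) k :=
  ⟨Icc (n + 1) (n + k), Icc_subset_Icc (by omega) (by omega), by rw [Nat.card_Icc]; omega⟩

lemma mem_highVertex {hnk : n ≤ k + 1} {a : ℕ} :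
    a ∈ (highVertex n k hnk).1 ↔ n + 1 ≤ a ∧ a ≤ n + k := mem_Icc

lemma color_starVertex (hnk : n ≤ k) {c : ℕ} (hc : c < n) :
    color n k (starVertex (k := k) (c := c) (by omega)).1 = c := by
  refine color_of_inter_low_eq_singleton hnk ?_ ?_
  · ext a
    simp only [mem_inter, mem_starVertex, mem_low, mem_singleton]
    omega
  · simp only [mem_starVertex]
    omega

lemma color_highVertex (hnk : n ≤ k + 1) : color n k (highVertex n k hnk).1 = n := by
  refine color_of_not_nonempty fun ⟨a, ha⟩ => ?_
  rw [mem_inter, mem_highVertex, mem_low] at ha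
  omega

lemma isBDominating_starVertex (hn : 2 ≤ n) (hnk : n ≤ k) {c : ℕ} (hc : c < n) :
    IsBDominating (KG (2 * k + 1) k) (finColoring n k (by omega))
      (starVertex (k := k) (c := c) (by omega)) := by
  refine isBDominating_of_complErase (by omega) fun i hi => ?_
  have hic : i.val ≠ c := fun h => hi (Fin.ext ((color_starVertex hnk hc).trans h.symm))
  by_cases hsucc : i.val = (c + 1) % n
  · refine ⟨k + 2 + c, ?_, Fin.ext ?_⟩
    · simp only [mem_sdiff, mem_Icc, mem_starVertex]
      omega
    change color n k _ = i
    rw [color_of_single hn (e := c + 1), hsucc]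
    ext a
    simp only [mem_sdiff, mem_complErase, mem_starVertex, mem_low, mem_singleton]
    omega
  · obtain ⟨y, hy, hyi⟩ := exists_mem_low_mod_eq (n := n) (i := if i.val = n then c else i)
      (by split_ifs <;> omega)
    have hyc : y ≠ c + 1 := by
      rintro rfl
      have := add_one_mod_ne hn hc
      split_ifs at hyi <;> omega
    rw [mem_low] at hy
    refine ⟨y, ?_, Fin.ext ?_⟩
    · simp only [mem_sdiff, mem_Icc, mem_starVertex]
      omega
    change color n k _ = i
    rw [color_of_isPairShape (c := c) (e := y) ⟨hc, hyc, ?_, ?_⟩]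
    · split_ifs at hyi ⊢ <;> omega
    · ext a
      simp only [mem_sdiff, mem_complErase, mem_starVertex, mem_low, mem_insert,
        mem_singleton]
      omega
    · ext a
      simp only [mem_inter, mem_complErase, mem_starVertex, mem_high, mem_hub]
      omega

lemma isBDominating_highVertex (hn : 2 ≤ n) (hnk : n ≤ k) :
    IsBDominating (KG (2 * k + 1) k) (finColoring n k (by omega)) (highVertex n k (by omega)) := by
  refine isBDominating_of_complErase (by omega) fun i hi => ?_
  have hin : i.val < n := by
    have hcol := color_highVertex (n := n) (k := k) (by omega)
    have : i.val ≠ n := fun h => hi (Fin.ext (hcol.trans h.symm))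
    omega
  obtain ⟨y, hy, hyi⟩ := exists_mem_low_mod_eq hin
  rw [mem_low] at hy
  refine ⟨y, ?_, Fin.ext ?_⟩
  · rw [mem_sdiff, mem_Icc, mem_highVertex]
    omega
  change color n k _ = i
  rw [color_of_single hn (e := y), hyi]
  ext a
  simp only [mem_sdiff, mem_complErase, mem_highVertex, mem_low, mem_singleton]
  omega

end HybridColoring

open HybridColoring in
theorem add_one_mem_bSet {n k : ℕ} (hn : 2 ≤ n) (hnk : n ≤ k) :
    n + 1 ∈ BSet (KG (2 * k + 1) k) := by
  refine ⟨n.succ_pos, finColoring n k (by omega), isProperColoring_finColoring hn hnk, ?_⟩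
  rintro ⟨i, hi⟩
  rcases (Nat.lt_succ_iff.1 hi).lt_or_eq with hin | rfl
  · exact ⟨starVertex (k := k) (c := i) (by omega), Fin.ext (color_starVertex hnk hin),
      isBDominating_starVertex hn hnk hin⟩
  · exact ⟨highVertex i k (by omega), Fin.ext (color_highVertex _), isBDominating_highVertex hn hnk⟩

end Kneser

/-- For every `k ≥ 1`, the Kneser graph `KG (2k+1) k` is b-continuous:
every integer `j` with `χ(KG(2k+1,k)) ≤ j ≤ b(KG(2k+1,k))` belongs to `B(KG(2k+1,k))`. -/
theorem stmt_5 (k : ℕ) (hk : 1 ≤ k) (j : ℕ)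
    (h₁ : (KG (2 * k + 1) k).chromaticNumber ≤ (j : ℕ∞))
    (h₂ : j ≤ bChromaticNumber (KG (2 * k + 1) k)) :
    j ∈ BSet (KG (2 * k + 1) k) := by
  have hj : 3 ≤ j := by exact_mod_cast (Kneser.three_le_chromaticNumber hk).trans h₁
  have hb : bChromaticNumber (KG (2 * k + 1) k) ≤ k + 2 :=
    csSup_le' fun m hm => Kneser.le_of_mem_bSet hm
  rcases Nat.lt_or_ge j (k + 2) with hjk | hjk
  · simpa [Nat.sub_add_cancel (by omega : 1 ≤ j)] using
      Kneser.add_one_mem_bSet (n := j - 1) (k := k) (by omega) (by omega)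
  · obtain rfl : j = bChromaticNumber (KG (2 * k + 1) k) := by omega
    exact bChromaticNumber_mem_bSet ⟨k + 2, fun m hm => Kneser.le_of_mem_bSet hm⟩ (by omega)
end

section
/- Let n, m be positive integers with n > 2m. Define f from the vertices of KG(n+2, m+1) to the vertices of KG(n, m) by: if A ⊆ {1,...,n+2} with |A ∩ {n+1, n+2}| ≤ 1, then f(A) = A \ {max A}; and if {n+1, n+2} ⊆ A, then f(A) = (A \ {n+1, n+2}) ∪ {max({1,...,n} \ A)}. Then f is a semi-locally-surjective graph homomorphism from KG(n+2, m+1) to KG(n, m). -/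
/-! Write `P = {n + 1, n + 2}`. A set meeting `P` at most once loses its maximum, which removes
its point of `P` if it has one; a set containing `P` trades it for the largest point of `[1, n]`
it misses, which exists as `n ≥ m`. Disjoint sets cannot both contain `P`, and if only `B` does,
then `max A ∈ [1, n] \ B`, so every point left in `A` lies below the point added to `B`; hence
the map preserves disjointness, and disjoint `m`-sets with `m > 0` are distinct. For adjacent
`S, T` in `KG n m`, the lifts `S ∪ {n + 1}` and `T ∪ {n + 2}` are adjacent and map to `S, T`. -/

open Finset

lemma Finset.sup_id_mem {α : Type*} [LinearOrder α] [OrderBot α] {s : Finset α}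
    (hs : s.Nonempty) : s.sup id ∈ s := by
  obtain ⟨i, hi, h⟩ := s.exists_mem_eq_sup hs id
  exact h ▸ hi

lemma Finset.card_inter_pair_le_one_iff {α : Type*} [DecidableEq α] {a b : α} (hab : a ≠ b)
    (s : Finset α) : (s ∩ {a, b}).card ≤ 1 ↔ ¬ (a ∈ s ∧ b ∈ s) := by
  rw [card_le_one]
  constructor
  · rintro h ⟨ha, hb⟩
    exact hab (h a (by simp [ha]) b (by simp [hb]))
  · intro h x hx y hy
    simp only [mem_inter, mem_insert, mem_singleton] at hx hy
    rcases hx with ⟨hx, rfl | rfl⟩ <;> rcases hy with ⟨hy, rfl | rfl⟩ <;> tauto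

def kneserProj (n : ℕ) (A : Finset ℕ) : Finset ℕ :=
  if (A ∩ ({n + 1, n + 2} : Finset ℕ)).card ≤ 1 then A.erase (A.sup id)
  else (A \ ({n + 1, n + 2} : Finset ℕ)) ∪ {(Icc 1 n \ A).sup id}

lemma kneserProj_eq_erase {n : ℕ} {A : Finset ℕ} (h : ¬ (n + 1 ∈ A ∧ n + 2 ∈ A)) :
    kneserProj n A = A.erase (A.sup id) := by
  rw [kneserProj, if_pos ((card_inter_pair_le_one_iff (by omega) A).2 h)]

lemma kneserProj_eq_union {n : ℕ} {A : Finset ℕ} (h₁ : n + 1 ∈ A) (h₂ : n + 2 ∈ A) :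
    kneserProj n A = (A \ {n + 1, n + 2}) ∪ {(Icc 1 n \ A).sup id} := by
  rw [kneserProj, if_neg (by rw [card_inter_pair_le_one_iff (by omega) A]; tauto)]

lemma erase_sup_subset_Icc {n : ℕ} {A : Finset ℕ} (hA : A ⊆ Icc 1 (n + 2))
    (h : ¬ (n + 1 ∈ A ∧ n + 2 ∈ A)) : A.erase (A.sup id) ⊆ Icc 1 n := by
  intro x hx
  obtain ⟨hx_ne, hxA⟩ := mem_erase.1 hx
  have hlt : x < A.sup id := lt_of_le_of_ne (le_sup (f := id) hxA) hx_ne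
  have hmax : A.sup id ∈ A := sup_id_mem ⟨x, hxA⟩
  have hx_Icc := mem_Icc.1 (hA hxA)
  have hmax_Icc := mem_Icc.1 (hA hmax)
  refine mem_Icc.2 ⟨hx_Icc.1, ?_⟩
  by_contra hx_gt
  obtain ⟨rfl, hmax_eq⟩ : x = n + 1 ∧ A.sup id = n + 2 := by omega
  exact h ⟨hxA, hmax_eq ▸ hmax⟩

lemma nonempty_Icc_sdiff {n : ℕ} {A : Finset ℕ} (hcard : A.card ≤ n + 1)
    (h₁ : n + 1 ∈ A) (h₂ : n + 2 ∈ A) : (Icc 1 n \ A).Nonempty := by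
  by_contra hempty
  rw [not_nonempty_iff_eq_empty, sdiff_eq_empty_iff_subset] at hempty
  have hsub : Icc 1 (n + 2) ⊆ A := by
    intro x hx
    obtain ⟨hx₁, hx₂⟩ := mem_Icc.1 hx
    obtain hx | rfl | rfl : x ≤ n ∨ x = n + 1 ∨ x = n + 2 := by omega
    exacts [hempty (mem_Icc.2 ⟨hx₁, hx⟩), h₁, h₂]
  have := card_le_card hsub
  rw [Nat.card_Icc] at this
  omega

lemma kneserProj_subset_Icc_and_card {n m : ℕ} (hmn : m ≤ n) {A : Finset ℕ}
    (hA : A ⊆ Icc 1 (n + 2)) (hcard : A.card = m + 1) :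
    kneserProj n A ⊆ Icc 1 n ∧ (kneserProj n A).card = m := by
  by_cases h : n + 1 ∈ A ∧ n + 2 ∈ A
  · obtain ⟨h₁, h₂⟩ := h
    rw [kneserProj_eq_union h₁ h₂]
    have hfree := nonempty_Icc_sdiff (by omega) h₁ h₂
    obtain ⟨hM_Icc, hM_A⟩ := mem_sdiff.1 (sup_id_mem hfree)
    refine ⟨union_subset (fun x hx => ?_) (singleton_subset_iff.2 hM_Icc), ?_⟩
    · obtain ⟨hxA, hx⟩ := mem_sdiff.1 hx
      have := mem_Icc.1 (hA hxA)
      simp only [mem_insert, mem_singleton, not_or] at hx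
      exact mem_Icc.2 ⟨by omega, by omega⟩
    · have hpair : ({n + 1, n + 2} : Finset ℕ) ⊆ A := by simp [insert_subset_iff, h₁, h₂]
      rw [card_union_of_disjoint (by simp [hM_A]), card_sdiff_of_subset hpair,
        card_pair (by omega), card_singleton, hcard]
      have := card_le_card hpair
      rw [card_pair (by omega)] at this
      omega
  · rw [kneserProj_eq_erase h]
    refine ⟨erase_sup_subset_Icc hA h, ?_⟩
    rw [card_erase_of_mem (sup_id_mem (card_pos.1 (by omega))), hcard]
    rfl

lemma disjoint_erase_sup_sdiff_pair_union {n : ℕ} {A B : Finset ℕ} (hA : A ⊆ Icc 1 (n + 2))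
    (hAB : Disjoint A B) (h₁ : n + 1 ∈ B) (h₂ : n + 2 ∈ B) :
    Disjoint (A.erase (A.sup id)) ((B \ {n + 1, n + 2}) ∪ {(Icc 1 n \ B).sup id}) := by
  rw [disjoint_left]
  intro x hx hxB
  obtain ⟨hx_ne, hxA⟩ := mem_erase.1 hx
  rcases mem_union.1 hxB with hxB | hxM
  · exact disjoint_left.1 hAB hxA (mem_sdiff.1 hxB).1
  have hmax : A.sup id ∈ A := sup_id_mem ⟨x, hxA⟩
  have hmax_le : A.sup id ≤ n := by
    have := mem_Icc.1 (hA hmax)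
    have : A.sup id ≠ n + 1 := fun h => disjoint_left.1 hAB hmax (h ▸ h₁)
    have : A.sup id ≠ n + 2 := fun h => disjoint_left.1 hAB hmax (h ▸ h₂)
    omega
  have hmax_mem : A.sup id ∈ Icc 1 n \ B :=
    mem_sdiff.2 ⟨mem_Icc.2 ⟨(mem_Icc.1 (hA hmax)).1, hmax_le⟩, disjoint_left.1 hAB hmax⟩
  have : A.sup id ≤ x := mem_singleton.1 hxM ▸ le_sup (f := id) hmax_mem
  have : x ≤ A.sup id := le_sup (f := id) hxA
  omega

lemma disjoint_kneserProj {n : ℕ} {A B : Finset ℕ} (hA : A ⊆ Icc 1 (n + 2))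
    (hB : B ⊆ Icc 1 (n + 2)) (hAB : Disjoint A B) :
    Disjoint (kneserProj n A) (kneserProj n B) := by
  by_cases hA₂ : n + 1 ∈ A ∧ n + 2 ∈ A <;> by_cases hB₂ : n + 1 ∈ B ∧ n + 2 ∈ B
  · exact absurd hB₂.1 (disjoint_left.1 hAB hA₂.1)
  · rw [kneserProj_eq_union hA₂.1 hA₂.2, kneserProj_eq_erase hB₂]
    exact (disjoint_erase_sup_sdiff_pair_union hB hAB.symm hA₂.1 hA₂.2).symm
  · rw [kneserProj_eq_erase hA₂, kneserProj_eq_union hB₂.1 hB₂.2]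
    exact disjoint_erase_sup_sdiff_pair_union hA hAB hB₂.1 hB₂.2
  · rw [kneserProj_eq_erase hA₂, kneserProj_eq_erase hB₂]
    exact hAB.mono (erase_subset _ _) (erase_subset _ _)

lemma kneserProj_insert {n c : ℕ} {S : Finset ℕ} (hS : S ⊆ Icc 1 n) (hc₁ : n < c)
    (hc₂ : c ≤ n + 2) : kneserProj n (insert c S) = S := by
  have hS_le : ∀ x ∈ S, x ≤ n := fun x hx => (mem_Icc.1 (hS hx)).2
  have hcS : c ∉ S := fun h => by have := hS_le c h; omega
  have hnot : ¬ (n + 1 ∈ insert c S ∧ n + 2 ∈ insert c S) := by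
    rintro ⟨h₁, h₂⟩
    rcases mem_insert.1 h₁ with h₁ | h₁ <;> rcases mem_insert.1 h₂ with h₂ | h₂
    · omega
    all_goals first | have := hS_le _ h₁; omega | have := hS_le _ h₂; omega
  have hsup : (insert c S).sup id = c := by
    rw [sup_insert]
    exact sup_eq_left.2 (Finset.sup_le fun x hx => (hS_le x hx).trans hc₁.le)
  rw [kneserProj_eq_erase hnot, hsup, erase_insert hcS]

namespace KneserVert

variable {n m : ℕ}

lemma le_of_mem (S : KneserVert n m) {x : ℕ} (hx : x ∈ S.1) : x ≤ n :=
  (mem_Icc.1 (S.2.1 hx)).2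

def insertTop (S : KneserVert n m) (c : ℕ) (hc₁ : n < c) (hc₂ : c ≤ n + 2) :
    KneserVert (n + 2) (m + 1) :=
  ⟨insert c S.1,
    insert_subset (mem_Icc.2 ⟨by omega, hc₂⟩) (S.2.1.trans (Icc_subset_Icc_right (by omega))),
    by rw [card_insert_of_notMem fun h => by have := S.le_of_mem h; omega, S.2.2]⟩

def proj (hmn : m ≤ n) (A : KneserVert (n + 2) (m + 1)) : KneserVert n m :=
  ⟨kneserProj n A.1, kneserProj_subset_Icc_and_card hmn A.2.1 A.2.2⟩

lemma proj_insertTop (hmn : m ≤ n) (S : KneserVert n m) {c : ℕ} (hc₁ : n < c)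
    (hc₂ : c ≤ n + 2) : proj hmn (S.insertTop c hc₁ hc₂) = S :=
  Subtype.ext (kneserProj_insert S.2.1 hc₁ hc₂)

end KneserVert

lemma KG.adj_of_disjoint {n m : ℕ} (hm : 0 < m) {X Y : KneserVert n m}
    (h : Disjoint X.1 Y.1) : (KG n m).Adj X Y := by
  refine ⟨fun hXY => ?_, h⟩
  subst hXY
  have hcard := X.2.2
  rw [disjoint_self.1 h, bot_eq_empty, card_empty] at hcard
  omega

lemma isSLSHom_proj {n m : ℕ} (hm : 0 < m) (hmn : m ≤ n) :
    IsSLSHom (KG (n + 2) (m + 1)) (KG n m) (KneserVert.proj hmn) := by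
  have lift_proj (S : KneserVert n m) :=
    KneserVert.proj_insertTop hmn S (c := n + 1) (by omega) (by omega)
  refine ⟨fun A B hAB => KG.adj_of_disjoint hm (disjoint_kneserProj A.2.1 B.2.1 hAB.2),
    fun S => ⟨_, lift_proj S⟩, fun S => ⟨_, lift_proj S, fun T hST => ?_⟩⟩
  refine ⟨T.insertTop (n + 2) (by omega) le_rfl, KneserVert.proj_insertTop hmn T _ _,
    KG.adj_of_disjoint m.succ_pos ?_⟩
  have hS : n + 2 ∉ S.1 := fun h => by have := S.le_of_mem h; omega
  have hT : n + 1 ∉ T.1 := fun h => by have := T.le_of_mem h; omega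
  simp [KneserVert.insertTop, disjoint_insert_left, disjoint_insert_right, hS, hT, hST.2]

/-- For `n > 2m` (with `n, m` positive), the map sending an
`(m+1)`-subset `A` of `{1, ..., n+2}` with `|A ∩ {n+1, n+2}| ≤ 1` to `A \ {max A}`,
and an `A` containing both `n+1` and `n+2` to `(A \ {n+1, n+2}) ∪ {max({1,...,n} \ A)}`,
is a semi-locally-surjective graph homomorphism from `KG (n+2) (m+1)` to `KG n m`.
(For a nonempty `A : Finset ℕ`, its maximum is `A.sup id`.) -/
theorem stmt_6 (n m : ℕ) (hm : 0 < m) (hnm : n > 2 * m) :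
    ∃ f : KneserVert (n + 2) (m + 1) → KneserVert n m,
      (∀ A : KneserVert (n + 2) (m + 1),
        (f A).1 =
          if (A.1 ∩ ({n + 1, n + 2} : Finset ℕ)).card ≤ 1 then
            A.1.erase (A.1.sup id)
          else
            (A.1 \ ({n + 1, n + 2} : Finset ℕ)) ∪ {(Finset.Icc 1 n \ A.1).sup id}) ∧
      IsSLSHom (KG (n + 2) (m + 1)) (KG n m) f :=
  ⟨KneserVert.proj (by omega), fun _ => rfl, isSLSHom_proj hm (by omega)⟩
end

section
/- Let a, b be nonnegative integers with a > 2b. For each integer i ≥ 2, let b_i := b(KG(2i + a, i + b)) denote the b-chromatic number of KG(2i + a, i + b). Then b_2 ≤ b_3 ≤ b_4 ≤ ... ; that is, for every integer i ≥ 2, b(KG(2i + a, i + b)) ≤ b(KG(2(i+1) + a, (i+1) + b)). -/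
/-!
A semi-locally-surjective homomorphism `φ : G → H` pulls colorful colorings of `H` back to
colorful colorings of `G`, so `B(H) ⊆ B(G)` and `b(H) ≤ b(G)`. Such a homomorphism
`KG(n+2, m+1) → KG(n, m)` exists whenever `0 < m ≤ n`: forget the two new points `n+1, n+2`
and restore the size by erasing the minimum (if neither was present) or inserting the least
positive integer not in the set (if both were). Every `m`-set `C ⊆ [n]` is the image of
`C ∪ {n+1}`, and each neighbour `D` of `C` is the image of the neighbour `D ∪ {n+2}` of
`C ∪ {n+1}`. For `m > n` the graph `KG(n, m)` is empty and `b = 0`. Taking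
`n = 2i + a`, `m = i + b` gives the theorem.
-/

open Finset

section BChromatic

variable {V W : Type*} {G : SimpleGraph V} {H : SimpleGraph W}

theorem IsSLSHom.bSet_subset {φ : V → W} (hφ : IsSLSHom G H φ) : BSet H ⊆ BSet G := by
  rintro k ⟨hk, c, hproper, hdom⟩
  refine ⟨hk, c ∘ φ, fun u v huv => hproper _ _ (hφ.1 u v huv), fun j => ?_⟩
  obtain ⟨w, hwj, hw⟩ := hdom j
  obtain ⟨v, rfl, hlift⟩ := hφ.2.2 w
  refine ⟨v, hwj, fun t => ?_⟩
  obtain ht | ⟨w', hadj, hw't⟩ := hw t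
  · exact Or.inl ht
  · obtain ⟨v', rfl, hvv'⟩ := hlift w' hadj
    exact Or.inr ⟨v', hvv', hw't⟩

theorem le_card_of_mem_bSet [Finite V] {k : ℕ} (hk : k ∈ BSet G) : k ≤ Nat.card V := by
  obtain ⟨-, f, -, hdom⟩ := hk
  choose g hg _ using hdom
  simpa using Nat.card_le_card_of_injective g fun i j hij => by rw [← hg i, ← hg j, hij]

theorem bSet_eq_empty [IsEmpty V] : BSet G = ∅ :=
  Set.eq_empty_of_forall_notMem fun _ ⟨hk, _, _, hdom⟩ => isEmptyElim (hdom ⟨0, hk⟩).choose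

theorem IsSLSHom.bChromaticNumber_le [Finite V] {φ : V → W} (hφ : IsSLSHom G H φ) :
    bChromaticNumber H ≤ bChromaticNumber G :=
  csSup_le_csSup' ⟨Nat.card V, fun _ => le_card_of_mem_bSet⟩ hφ.bSet_subset

end BChromatic

section KneserVert

variable {n m : ℕ}

instance (n m : ℕ) : Finite (KneserVert n m) :=
  Finite.of_injective (fun X : KneserVert n m => (⟨X.1, mem_powerset.2 X.2.1⟩ : (Icc 1 n).powerset))
    fun _ _ h => Subtype.ext (congrArg Subtype.val h :)

theorem isEmpty_kneserVert (h : n < m) : IsEmpty (KneserVert n m) :=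
  ⟨fun X => (card_le_card X.2.1).not_gt (by simpa [X.2.2] using h)⟩

theorem zero_notMem_kneserVert (X : KneserVert n m) : 0 ∉ X.1 := fun h => by
  simpa using X.2.1 h

theorem KG_adj_iff (hm : 0 < m) {X Y : KneserVert n m} :
    (KG n m).Adj X Y ↔ Disjoint X.1 Y.1 := by
  refine ⟨And.right, fun h => ⟨fun hXY => ?_, h⟩⟩
  rw [hXY, disjoint_self_iff_empty] at h
  simp [← Y.2.2, h] at hm

end KneserVert

section LeastAbsent

variable {A : Finset ℕ}

theorem exists_pos_notMem (A : Finset ℕ) : ∃ x, 0 < x ∧ x ∉ A := by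
  obtain ⟨x, hx⟩ := Infinite.exists_notMem_finset (insert 0 A)
  rw [mem_insert, not_or] at hx
  exact ⟨x, Nat.pos_of_ne_zero hx.1, hx.2⟩

def leastAbsent (A : Finset ℕ) : ℕ :=
  Nat.find (exists_pos_notMem A)

theorem leastAbsent_pos (A : Finset ℕ) : 0 < leastAbsent A :=
  (Nat.find_spec (exists_pos_notMem A)).1

theorem leastAbsent_notMem (A : Finset ℕ) : leastAbsent A ∉ A :=
  (Nat.find_spec (exists_pos_notMem A)).2

theorem leastAbsent_le {x : ℕ} (hx : 0 < x) (hxA : x ∉ A) : leastAbsent A ≤ x :=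
  Nat.find_min' (exists_pos_notMem A) ⟨hx, hxA⟩

theorem leastAbsent_mem_Icc {n : ℕ} (h : #(A ∩ Icc 1 n) < n) : leastAbsent A ∈ Icc 1 n := by
  obtain ⟨x, hx, hxA⟩ : ∃ x ∈ Icc 1 n, x ∉ A := by
    by_contra! hsub
    exact (card_le_card fun x hx => mem_inter.2 ⟨hsub x hx, hx⟩).not_gt (by simpa using h)
  exact mem_Icc.2 ⟨leastAbsent_pos A, (leastAbsent_le (mem_Icc.1 hx).1 hxA).trans (mem_Icc.1 hx).2⟩

end LeastAbsent

section KneserRetract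

variable {n : ℕ} {A B : Finset ℕ}

theorem card_inter_Icc_add (hA : A ⊆ Icc 1 (n + 2)) :
    #(A ∩ Icc 1 n) + (if n + 1 ∈ A then 1 else 0) + (if n + 2 ∈ A then 1 else 0) = #A := by
  have hIcc : Icc 1 (n + 2) = insert (n + 2) (insert (n + 1) (Icc 1 n)) := by
    ext x; simp only [mem_Icc, mem_insert]; omega
  conv_rhs => rw [← inter_eq_left.2 hA, hIcc]
  rw [insert_inter, insert_inter]
  split_ifs <;> simp [card_insert_of_notMem]

def kneserRetract (n : ℕ) (A : Finset ℕ) : Finset ℕ :=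
  if n + 1 ∈ A ∧ n + 2 ∈ A then insert (leastAbsent A) (A ∩ Icc 1 n)
  else if n + 1 ∈ A ∨ n + 2 ∈ A then A ∩ Icc 1 n
  else if h : A.Nonempty then A.erase (A.min' h) else A

theorem kneserRetract_of_both (h : n + 1 ∈ A ∧ n + 2 ∈ A) :
    kneserRetract n A = insert (leastAbsent A) (A ∩ Icc 1 n) := if_pos h

theorem kneserRetract_subset_self (h : ¬(n + 1 ∈ A ∧ n + 2 ∈ A)) : kneserRetract n A ⊆ A := by
  rw [kneserRetract, if_neg h]
  split_ifs
  exacts [inter_subset_left, erase_subset _ _, subset_rfl]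

theorem exists_lt_of_mem_kneserRetract (h1 : n + 1 ∉ A) (h2 : n + 2 ∉ A) {y : ℕ}
    (hy : y ∈ kneserRetract n A) : ∃ z ∈ A, z < y := by
  rw [kneserRetract, if_neg (by tauto), if_neg (by tauto)] at hy
  split_ifs at hy with hA
  · exact ⟨A.min' hA, A.min'_mem hA, A.min'_lt_of_mem_erase_min' hA hy⟩
  · simp_all [not_nonempty_iff_eq_empty]

theorem kneserRetract_insert {D : Finset ℕ} (hD : D ⊆ Icc 1 n) {t : ℕ}
    (ht : t = n + 1 ∨ t = n + 2) : kneserRetract n (insert t D) = D := by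
  have hnD : n + 1 ∉ D ∧ n + 2 ∉ D := ⟨fun h => by simpa using hD h, fun h => by simpa using hD h⟩
  have hinter : insert t D ∩ Icc 1 n = D := by
    rw [insert_inter_of_notMem (by rcases ht with rfl | rfl <;> simp), inter_eq_left.2 hD]
  rw [kneserRetract, if_neg, if_pos, hinter] <;> rcases ht with rfl | rfl <;> simp [hnD]

/- The inserted point `leastAbsent A` lies below every positive integer outside `A`, in particular
below `min' B`, while all points kept from `B` lie above `min' B`. -/
theorem disjoint_kneserRetract_of_both (hd : Disjoint A B) (hA : n + 1 ∈ A ∧ n + 2 ∈ A)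
    (hB : 0 ∉ B) : Disjoint (kneserRetract n A) (kneserRetract n B) := by
  have hB1 : n + 1 ∉ B := disjoint_left.1 hd hA.1
  have hB2 : n + 2 ∉ B := disjoint_left.1 hd hA.2
  rw [kneserRetract_of_both hA, disjoint_left]
  intro y hyA hyB
  rcases mem_insert.1 hyA with rfl | hy
  · obtain ⟨z, hz, hzy⟩ := exists_lt_of_mem_kneserRetract hB1 hB2 hyB
    have hz0 : 0 < z := Nat.pos_of_ne_zero fun h => hB (h ▸ hz)
    exact hzy.not_ge (leastAbsent_le hz0 (disjoint_right.1 hd hz))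
  · exact disjoint_left.1 hd (mem_inter.1 hy).1 (kneserRetract_subset_self (by tauto) hyB)

theorem disjoint_kneserRetract (hd : Disjoint A B) (hA : 0 ∉ A) (hB : 0 ∉ B) :
    Disjoint (kneserRetract n A) (kneserRetract n B) := by
  by_cases hA2 : n + 1 ∈ A ∧ n + 2 ∈ A
  · exact disjoint_kneserRetract_of_both hd hA2 hB
  by_cases hB2 : n + 1 ∈ B ∧ n + 2 ∈ B
  · exact (disjoint_kneserRetract_of_both hd.symm hB2 hA).symm
  exact hd.mono (kneserRetract_subset_self hA2) (kneserRetract_subset_self hB2)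

theorem kneserRetract_mem {m : ℕ} (hmn : m ≤ n) (hA : A ⊆ Icc 1 (n + 2)) (hcard : #A = m + 1) :
    kneserRetract n A ⊆ Icc 1 n ∧ #(kneserRetract n A) = m := by
  have hsplit := card_inter_Icc_add hA
  by_cases hboth : n + 1 ∈ A ∧ n + 2 ∈ A
  · rw [if_pos hboth.1, if_pos hboth.2] at hsplit
    rw [kneserRetract_of_both hboth]
    refine ⟨insert_subset (leastAbsent_mem_Icc (by omega)) inter_subset_right, ?_⟩
    rw [card_insert_of_notMem fun h => leastAbsent_notMem A (mem_inter.1 h).1]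
    omega
  by_cases hone : n + 1 ∈ A ∨ n + 2 ∈ A
  · rw [kneserRetract, if_neg hboth, if_pos hone]
    refine ⟨inter_subset_right, ?_⟩
    split_ifs at hsplit <;> first | omega | tauto
  have hAn : A ⊆ Icc 1 n := fun x hx => by
    have hx' := mem_Icc.1 (hA hx)
    have : x ≠ n + 1 ∧ x ≠ n + 2 := ⟨fun h => hone (.inl (h ▸ hx)), fun h => hone (.inr (h ▸ hx))⟩
    exact mem_Icc.2 (by omega)
  have hne : A.Nonempty := card_pos.1 (by omega)
  rw [kneserRetract, if_neg hboth, if_neg hone, dif_pos hne]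
  exact ⟨(erase_subset _ _).trans hAn, by rw [card_erase_of_mem (A.min'_mem hne), hcard]; rfl⟩

end KneserRetract

section KneserSLS

variable {n m : ℕ}

def KneserVert.retract (hmn : m ≤ n) (X : KneserVert (n + 2) (m + 1)) : KneserVert n m :=
  ⟨kneserRetract n X.1, kneserRetract_mem hmn X.2.1 X.2.2⟩

def KneserVert.extend (t : ℕ) (ht : t = n + 1 ∨ t = n + 2) (D : KneserVert n m) :
    KneserVert (n + 2) (m + 1) :=
  ⟨insert t D.1, insert_subset (by rcases ht with rfl | rfl <;> simp)
      (D.2.1.trans (Icc_subset_Icc_right (by omega))),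
    by rw [card_insert_of_notMem fun h => by rcases ht with rfl | rfl <;> simpa using D.2.1 h, D.2.2]⟩

theorem KneserVert.retract_extend (hmn : m ≤ n) {t : ℕ} (ht : t = n + 1 ∨ t = n + 2)
    (D : KneserVert n m) : (D.extend t ht).retract hmn = D :=
  Subtype.ext (kneserRetract_insert D.2.1 ht)

theorem isSLSHom_kneserVertRetract (hm : 0 < m) (hmn : m ≤ n) :
    IsSLSHom (KG (n + 2) (m + 1)) (KG n m) (KneserVert.retract hmn) := by
  refine ⟨fun X Y hXY => ?_, fun C => ⟨_, C.retract_extend hmn (.inl rfl)⟩, fun C => ?_⟩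
  · rw [KG_adj_iff hm]
    exact disjoint_kneserRetract ((KG_adj_iff m.succ_pos).1 hXY)
      (zero_notMem_kneserVert X) (zero_notMem_kneserVert Y)
  refine ⟨C.extend (n + 1) (.inl rfl), C.retract_extend hmn _, fun D hCD => ?_⟩
  refine ⟨D.extend (n + 2) (.inr rfl), D.retract_extend hmn _, ?_⟩
  rw [KG_adj_iff hm] at hCD
  have hC : n + 2 ∉ C.1 := fun h => by simpa using C.2.1 h
  have hD : n + 1 ∉ D.1 := fun h => by simpa using D.2.1 h
  rw [KG_adj_iff m.succ_pos]
  simp [KneserVert.extend, disjoint_insert_left, disjoint_insert_right, hC, hD, hCD]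

theorem bChromaticNumber_KG_le (hm : 0 < m) :
    bChromaticNumber (KG n m) ≤ bChromaticNumber (KG (n + 2) (m + 1)) := by
  rcases le_or_gt m n with hmn | hnm
  · exact (isSLSHom_kneserVertRetract hm hmn).bChromaticNumber_le
  · have := isEmpty_kneserVert hnm
    simp [bChromaticNumber, bSet_eq_empty]

end KneserSLS

theorem stmt_9_general (a b : ℕ) (i : ℕ) (hi : 2 ≤ i) :
    bChromaticNumber (KG (2 * i + a) (i + b)) ≤
      bChromaticNumber (KG (2 * (i + 1) + a) ((i + 1) + b)) := by
  rw [show 2 * (i + 1) + a = 2 * i + a + 2 by ring, show i + 1 + b = i + b + 1 by ring]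
  exact bChromaticNumber_KG_le (by omega)

/-- For nonnegative integers `a > 2b` and every integer `i ≥ 2`,
`b(KG(2i+a, i+b)) ≤ b(KG(2(i+1)+a, (i+1)+b))`. -/
theorem stmt_9 (a b : ℕ) (hab : a > 2 * b) (i : ℕ) (hi : 2 ≤ i) :
    bChromaticNumber (KG (2 * i + a) (i + b)) ≤
      bChromaticNumber (KG (2 * (i + 1) + a) ((i + 1) + b)) :=
  stmt_9_general a b i hi
end
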